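/- Let G be a finite transitive directed graph with all in-degrees at least 2. Then applying a v-lag at every vertex v of in-degree at least 3 (in any order) produces a finite transitive directed graph Ĝ which is in-degree 2-regular, together with an embedding V ⊆ V̂ extending to a bijection θ from finite paths in G to finite paths in Ĝ with both endpoints in V. -/

import Mathlib

/-- A finite directed graph with range and source maps. -/
structure FinDigraph where
  V : Type
  E : Type
  finV : Finite V
  finE : Finite E
  nonemptyV : Nonempty V
  r : E → V
  s : E → V

/-- `l` is a nonempty directed path with range `tgt` and source `src`. -/
def IsPathFrom {V E : Type*} (r s : E → V) (l : List E) (src tgt : V) : Prop :=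
  List.Chain' (fun e f => s e = r f) l ∧
    l.head?.map r = some tgt ∧ l.getLast?.map s = some src

/-- The graph is transitive: there is a path between any two vertices. -/
def FinDigraph.Transitive (G : FinDigraph) : Prop :=
  ∀ v w : G.V, ∃ l : List G.E, IsPathFrom G.r G.s l v w

/-- The `v`-lag of `G` at a vertex `v` of in-degree `d ≥ 3`: the `d` incoming edges of
`v` (enumerated by `enum`) are rerouted through a chain of `d - 2` new vertices
`v_1, ..., v_{d-2}`, each of in-degree `2`, joined by new edges `f_{i} : v_i → v_{i-1}`
(with `v_0 := v`). -/
noncomputable def FinDigraph.lag (G : FinDigraph) (v : G.V) (d : ℕ) (hd : 3 ≤ d)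
    (enum : {e : G.E // G.r e = v} ≃ Fin d) : FinDigraph where
  V := G.V ⊕ Fin (d - 2)
  E := G.E ⊕ Fin (d - 2)
  finV := by have := G.finV; infer_instance
  finE := by have := G.finE; infer_instance
  nonemptyV := by have := G.nonemptyV; infer_instance
  r := fun x =>
    match x with
    | Sum.inl e =>
      @dite _ (G.r e = v) (Classical.dec _)
        (fun h =>
          if h0 : (enum ⟨e, h⟩).val = 0 then Sum.inl v
          else if h1 : (enum ⟨e, h⟩).val = d - 1 then Sum.inr ⟨d - 3, by omega⟩
          else Sum.inr ⟨(enum ⟨e, h⟩).val - 1, by have := (enum ⟨e, h⟩).isLt; omega⟩)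
        (fun _ => Sum.inl (G.r e))
    | Sum.inr i =>
      if h0 : i.val = 0 then Sum.inl v
      else Sum.inr ⟨i.val - 1, by have := i.isLt; omega⟩
  s := fun x =>
    match x with
    | Sum.inl e => Sum.inl (G.s e)
    | Sum.inr i => Sum.inr i

/-- One lag step: apply the `v`-lag at a vertex of in-degree `d ≥ 3`. -/
def LagStep (G G' : FinDigraph) : Prop :=
  ∃ (v : G.V) (d : ℕ) (hd : 3 ≤ d) (_ : Nat.card {e : G.E // G.r e = v} = d)
    (enum : {e : G.E // G.r e = v} ≃ Fin d), G' = G.lag v d hd enum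

theorem List.chain'_append {α : Type*} {R : α → α → Prop} {l₁ l₂ : List α} :
    List.Chain' R (l₁ ++ l₂) ↔ List.Chain' R l₁ ∧ List.Chain' R l₂ ∧
      ∀ x ∈ l₁.getLast?, ∀ y ∈ l₂.head?, R x y :=
  List.isChain_append

theorem List.chain'_singleton {α : Type*} {R : α → α → Prop} (a : α) : List.Chain' R [a] :=
  List.isChain_singleton a

theorem List.chain'_cons {α : Type*} {R : α → α → Prop} {x y : α} {l : List α} :
    List.Chain' R (x :: y :: l) ↔ R x y ∧ List.Chain' R (y :: l) :=
  List.isChain_cons_cons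

theorem List.Chain'.tail {α : Type*} {R : α → α → Prop} {l : List α} (h : List.Chain' R l) :
    List.Chain' R l.tail :=
  List.IsChain.tail h

@[simp] theorem List.chain'_nil {α : Type*} {R : α → α → Prop} : List.Chain' R [] :=
  List.IsChain.nil

lemma isPathFrom_append {V E : Type*} (r s : E → V) {l₁ l₂ : List E} {a b c : V}
    (h₁ : IsPathFrom r s l₁ b c) (h₂ : IsPathFrom r s l₂ a b) :
    IsPathFrom r s (l₁ ++ l₂) a c := by
  obtain ⟨hc₁, hh₁, ht₁⟩ := h₁
  obtain ⟨hc₂, hh₂, ht₂⟩ := h₂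
  have hne₁ : l₁ ≠ [] := by intro h; rw [h] at hh₁; simp at hh₁
  have hne₂ : l₂ ≠ [] := by intro h; rw [h] at hh₂; simp at hh₂
  refine ⟨?_, ?_, ?_⟩
  · rw [List.chain'_append]
    refine ⟨hc₁, hc₂, ?_⟩
    intro x hx y hy
    have hsx : s x = b := by
      simp only [Option.map_eq_some_iff, Option.some_inj] at ht₁
      obtain ⟨z, hz, hsz⟩ := ht₁
      rw [hx] at hz
      cases hz
      exact hsz
    have hry : r y = b := by
      simp only [Option.map_eq_some_iff, Option.some_inj] at hh₂
      obtain ⟨z, hz, hrz⟩ := hh₂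
      rw [hy] at hz
      cases hz
      exact hrz
    rw [hsx, hry]
  · rw [List.head?_append_of_ne_nil _ hne₁]
    exact hh₁
  · rw [List.getLast?_append]
    cases hlast : l₂.getLast? with
    | none => exact absurd (List.getLast?_eq_none_iff.mp hlast) hne₂
    | some z =>
      rw [hlast] at ht₂
      exact ht₂

def Good (G H : FinDigraph) : Prop :=
  ∃ ι : G.V → H.V, Function.Injective ι ∧
    ∃ Θ : List G.E → List H.E,
      (∀ l₁ l₂ : List G.E, Θ (l₁ ++ l₂) = Θ l₁ ++ Θ l₂) ∧
      (∀ l : List G.E, (Θ l).head?.map H.r = (l.head?.map G.r).map ι) ∧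
      (∀ l : List G.E, (Θ l).getLast?.map H.s = (l.getLast?.map G.s).map ι) ∧
      Set.BijOn Θ
        {l : List G.E | List.Chain' (fun e f => G.s e = G.r f) l}
        {m : List H.E | List.Chain' (fun x y => H.s x = H.r y) m ∧
          (∀ a ∈ m.head?.map H.r, a ∈ Set.range ι) ∧
          (∀ a ∈ m.getLast?.map H.s, a ∈ Set.range ι)}

theorem Good.refl (G : FinDigraph) : Good G G := by
  refine ⟨id, fun a b h => h, id, fun _ _ => rfl, by simp, by simp, ?_⟩
  exact ⟨fun l hl => ⟨hl, by simp, by simp⟩, fun a _ b _ h => h, fun m hm => ⟨m, hm.1, rfl⟩⟩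

theorem Good.trans {G H K : FinDigraph} (h1 : Good G H) (h2 : Good H K) : Good G K := by
  obtain ⟨ι₁, hι₁, Θ₁, happ₁, hhd₁, hlast₁, hbij₁⟩ := h1
  obtain ⟨ι₂, hι₂, Θ₂, happ₂, hhd₂, hlast₂, hbij₂⟩ := h2
  refine ⟨ι₂ ∘ ι₁, hι₂.comp hι₁, Θ₂ ∘ Θ₁, fun l₁ l₂ => by simp [happ₁, happ₂], ?_, ?_, ?_⟩
  · intro l
    simp only [Function.comp_apply, hhd₂, hhd₁, Option.map_map]
    rfl
  · intro l
    simp only [Function.comp_apply, hlast₂, hlast₁, Option.map_map]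
    rfl
  constructor
  · -- MapsTo
    intro l hl
    obtain ⟨hc, hh, ht⟩ := hbij₂.mapsTo (hbij₁.mapsTo hl).1
    refine ⟨hc, ?_, ?_⟩
    · intro a ha
      rw [Function.comp_apply, hhd₂, hhd₁] at ha
      simp only [Option.map_map, Option.mem_def, Option.map_eq_some_iff] at ha
      obtain ⟨x, _, rfl⟩ := ha
      exact ⟨G.r x, rfl⟩
    · intro a ha
      rw [Function.comp_apply, hlast₂, hlast₁] at ha
      simp only [Option.map_map, Option.mem_def, Option.map_eq_some_iff] at ha
      obtain ⟨x, _, rfl⟩ := ha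
      exact ⟨G.s x, rfl⟩
  constructor
  · -- InjOn
    intro a ha b hb h
    exact hbij₁.injOn ha hb (hbij₂.injOn (hbij₁.mapsTo ha).1 (hbij₁.mapsTo hb).1 h)
  · -- SurjOn
    intro m ⟨hc, hh, ht⟩
    obtain ⟨m₁, hm₁, rfl⟩ := hbij₂.surjOn ⟨hc, fun a ha => by
        obtain ⟨b, hb⟩ := hh a ha; exact ⟨ι₁ b, hb⟩,
      fun a ha => by obtain ⟨b, hb⟩ := ht a ha; exact ⟨ι₁ b, hb⟩⟩
    -- hm₁ : m₁ ∈ chains H; need endpoints in range ι₁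
    have hm₁' : m₁ ∈ {l | List.Chain' (fun e f => H.s e = H.r f) l ∧
        (∀ a ∈ l.head?.map H.r, a ∈ Set.range ι₁) ∧
        (∀ a ∈ l.getLast?.map H.s, a ∈ Set.range ι₁)} := by
      refine ⟨hm₁, ?_, ?_⟩
      · intro a ha
        have : ι₂ a ∈ (Θ₂ m₁).head?.map K.r := by
          rw [hhd₂]
          exact Option.mem_map_of_mem ι₂ ha
        obtain ⟨b, hb⟩ := hh _ this
        exact ⟨b, hι₂ hb⟩
      · intro a ha
        have : ι₂ a ∈ (Θ₂ m₁).getLast?.map K.s := by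
          rw [hlast₂]
          exact Option.mem_map_of_mem ι₂ ha
        obtain ⟨b, hb⟩ := ht _ this
        exact ⟨b, hι₂ hb⟩
    obtain ⟨l, hl, rfl⟩ := hbij₁.surjOn hm₁'
    exact ⟨l, hl, rfl⟩

structure LagSetup where
  G : FinDigraph
  v : G.V
  d : ℕ
  hd : 3 ≤ d
  enum : {e : G.E // G.r e = v} ≃ Fin d

namespace LagSetup

variable (S : LagSetup)

@[reducible] noncomputable def L : FinDigraph where
  V := S.G.V ⊕ Fin (S.d - 2)
  E := S.G.E ⊕ Fin (S.d - 2)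
  finV := (S.G.lag S.v S.d S.hd S.enum).finV
  finE := (S.G.lag S.v S.d S.hd S.enum).finE
  nonemptyV := (S.G.lag S.v S.d S.hd S.enum).nonemptyV
  r := (S.G.lag S.v S.d S.hd S.enum).r
  s := (S.G.lag S.v S.d S.hd S.enum).s

lemma d2_pos : 0 < S.d - 2 := by have := S.hd; omega

lemma s_inl (e : S.G.E) : S.L.s (Sum.inl e) = Sum.inl (S.G.s e) := rfl

lemma s_inr (i : Fin (S.d - 2)) : S.L.s (Sum.inr i) = Sum.inr i := rfl

lemma r_inr_zero (i : Fin (S.d - 2)) (h : i.val = 0) : S.L.r (Sum.inr i) = Sum.inl S.v := by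
  show (if h0 : i.val = 0 then _ else _) = _
  rw [dif_pos h]

lemma r_inr_pos (i : Fin (S.d - 2)) (h : i.val ≠ 0) :
    S.L.r (Sum.inr i) = Sum.inr ⟨i.val - 1, by have := i.isLt; omega⟩ := by
  show (if h0 : i.val = 0 then _ else _) = _
  rw [dif_neg h]

noncomputable def mink (e : S.G.E) : ℕ :=
  @dite _ (S.G.r e = S.v) (Classical.dec _) (fun h => min (S.enum ⟨e, h⟩).val (S.d - 2))
    (fun _ => 0)

lemma mink_eq_pos {e : S.G.E} (hv : S.G.r e = S.v) :
    S.mink e = min (S.enum ⟨e, hv⟩).val (S.d - 2) := by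
  unfold mink; rw [dif_pos hv]

lemma mink_eq_zero {e : S.G.E} (hv : ¬ S.G.r e = S.v) : S.mink e = 0 := by
  unfold mink; rw [dif_neg hv]

lemma mink_le (e : S.G.E) : S.mink e ≤ S.d - 2 := by
  by_cases hv : S.G.r e = S.v
  · rw [S.mink_eq_pos hv]; omega
  · rw [S.mink_eq_zero hv]; omega

lemma rv_of_mink_pos {e : S.G.E} (h : S.mink e ≠ 0) : S.G.r e = S.v := by
  by_contra hv; exact h (S.mink_eq_zero hv)

lemma r_inl_zero (e : S.G.E) (h : S.mink e = 0) : S.L.r (Sum.inl e) = Sum.inl (S.G.r e) := by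
  show (@dite _ (S.G.r e = S.v) (Classical.dec _) _ _) = _
  by_cases hv : S.G.r e = S.v
  · rw [dif_pos hv]
    have h0 : (S.enum ⟨e, hv⟩).val = 0 := by
      have := S.d2_pos; rw [S.mink_eq_pos hv] at h; omega
    rw [dif_pos h0, hv]
  · rw [dif_neg hv]

lemma r_inl_pos (e : S.G.E) (h : S.mink e ≠ 0) :
    S.L.r (Sum.inl e) = Sum.inr ⟨S.mink e - 1, by have := S.mink_le e; have := S.d2_pos; omega⟩ := by
  have hv : S.G.r e = S.v := S.rv_of_mink_pos h
  show (@dite _ (S.G.r e = S.v) (Classical.dec _) _ _) = _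
  rw [dif_pos hv]
  have hm : S.mink e = min (S.enum ⟨e, hv⟩).val (S.d - 2) := S.mink_eq_pos hv
  have h0 : (S.enum ⟨e, hv⟩).val ≠ 0 := by
    intro h0; rw [hm, h0] at h; simp at h
  rw [dif_neg h0]
  have hlt := (S.enum ⟨e, hv⟩).isLt
  have hd := S.hd
  by_cases h1 : (S.enum ⟨e, hv⟩).val = S.d - 1
  · rw [dif_pos h1]
    congr 1
    apply Fin.ext
    simp only
    omega
  · rw [dif_neg h1]
    congr 1
    apply Fin.ext
    simp only
    omega

def run (n : ℕ) : List S.L.E :=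
  ((List.finRange (S.d - 2)).take n).map Sum.inr

@[simp] lemma run_zero : S.run 0 = [] := rfl

lemma run_succ {n : ℕ} (hn : n < S.d - 2) :
    S.run (n + 1) = S.run n ++ ([Sum.inr ⟨n, hn⟩] : List S.L.E) := by
  unfold run
  rw [List.take_succ, List.map_append]
  congr 1
  rw [List.getElem?_eq_getElem (by simpa using hn)]
  simp [List.getElem_finRange]

lemma run_head {n : ℕ} (hn : n ≠ 0) :
    (S.run n).head? = some (Sum.inr ⟨0, S.d2_pos⟩) := by
  unfold run
  rw [List.head?_map, List.head?_eq_getElem?, List.getElem?_take,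
    if_pos (by omega), List.getElem?_eq_getElem (by simpa using S.d2_pos)]
  simp [List.getElem_finRange]

lemma run_getLast {n : ℕ} (hn : n ≠ 0) (hle : n ≤ S.d - 2) :
    (S.run n).getLast? = some (Sum.inr ⟨n - 1, by omega⟩) := by
  obtain ⟨m, rfl⟩ := Nat.exists_eq_succ_of_ne_zero hn
  rw [S.run_succ (by omega), List.getLast?_concat]
  congr 1

lemma run_chain {n : ℕ} (hle : n ≤ S.d - 2) :
    List.Chain' (fun x y => S.L.s x = S.L.r y) (S.run n) := by
  induction n with
  | zero => simp
  | succ m ih =>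
    rw [S.run_succ (by omega)]
    rw [List.chain'_append]
    refine ⟨ih (by omega), List.chain'_singleton _, ?_⟩
    intro x hx y hy
    rcases Nat.eq_zero_or_pos m with hm | hm
    · subst hm; simp [run_zero] at hx
    · rw [S.run_getLast (by omega) (by omega)] at hx
      simp only [Option.mem_def, Option.some_inj] at hx hy
      simp only [List.head?_cons, Option.some_inj] at hy
      subst hx; subst hy
      rw [S.s_inr, S.r_inr_pos _ (by simp; omega)]

lemma run_length (n : ℕ) : (S.run n).length = min n (S.d - 2) := by
  unfold run; simp

lemma run_ne_nil {n : ℕ} (hn : n ≠ 0) : S.run n ≠ [] := by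
  intro h
  have hl := S.run_length n
  rw [h, List.length_nil] at hl
  have := S.d2_pos
  omega

noncomputable def Te (e : S.G.E) : List S.L.E :=
  S.run (S.mink e) ++ ([Sum.inl e] : List S.L.E)

noncomputable def TL (l : List S.G.E) : List S.L.E := l.flatMap S.Te

lemma Te_ne_nil (e : S.G.E) : S.Te e ≠ [] := by
  unfold Te; simp

lemma Te_getLast (e : S.G.E) : (S.Te e).getLast? = some (Sum.inl e) := by
  unfold Te; rw [List.getLast?_concat]

lemma Te_head_r (e : S.G.E) : (S.Te e).head?.map S.L.r = some (Sum.inl (S.G.r e)) := by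
  unfold Te
  rcases Nat.eq_zero_or_pos (S.mink e) with hm | hm
  · rw [hm, run_zero, List.nil_append, List.head?_cons, Option.map_some,
      S.r_inl_zero e hm]
  · rw [List.head?_append_of_ne_nil _ (S.run_ne_nil (by omega)),
      S.run_head (by omega), Option.map_some, S.r_inr_zero _ rfl,
      S.rv_of_mink_pos (by omega)]

lemma Te_chain (e : S.G.E) : List.Chain' (fun x y => S.L.s x = S.L.r y) (S.Te e) := by
  unfold Te
  rw [List.chain'_append]
  refine ⟨S.run_chain (S.mink_le e), List.chain'_singleton _, ?_⟩
  intro x hx y hy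
  simp only [List.head?_cons, Option.mem_def, Option.some_inj] at hy
  subst hy
  rcases Nat.eq_zero_or_pos (S.mink e) with hm | hm
  · rw [hm, run_zero] at hx; simp at hx
  · rw [S.run_getLast (by omega) (S.mink_le e)] at hx
    simp only [Option.mem_def, Option.some_inj] at hx
    subst hx
    rw [S.s_inr, S.r_inl_pos e (by omega)]

@[simp] lemma TL_nil : S.TL [] = [] := rfl

lemma TL_append (l₁ l₂ : List S.G.E) : S.TL (l₁ ++ l₂) = S.TL l₁ ++ S.TL l₂ :=
  List.flatMap_append

lemma TL_cons (e : S.G.E) (l : List S.G.E) : S.TL (e :: l) = S.Te e ++ S.TL l := by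
  unfold TL; simp

lemma TL_ne_nil {l : List S.G.E} (hl : l ≠ []) : S.TL l ≠ [] := by
  obtain ⟨e, t, rfl⟩ := List.exists_cons_of_ne_nil hl
  rw [TL_cons]
  simp [S.Te_ne_nil e]

lemma TL_head_r (l : List S.G.E) :
    (S.TL l).head?.map S.L.r = (l.head?.map S.G.r).map Sum.inl := by
  cases l with
  | nil => rfl
  | cons e t =>
    rw [TL_cons, List.head?_append_of_ne_nil _ (S.Te_ne_nil e), S.Te_head_r]
    rfl

lemma TL_getLast (l : List S.G.E) : (S.TL l).getLast? = l.getLast?.map Sum.inl := by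
  induction l with
  | nil => rfl
  | cons e t ih =>
    rw [TL_cons, List.getLast?_append, ih]
    cases t with
    | nil => simp [S.Te_getLast]
    | cons f u =>
      rw [List.getLast?_cons_cons]
      have : (f :: u).getLast? ≠ none := by simp [List.getLast?_eq_none_iff]
      cases h : (f :: u).getLast? with
      | none => exact absurd h this
      | some a => simp

lemma TL_getLast_s (l : List S.G.E) :
    (S.TL l).getLast?.map S.L.s = (l.getLast?.map S.G.s).map Sum.inl := by
  rw [TL_getLast]
  cases l.getLast? <;> rfl

lemma TL_chain {l : List S.G.E} (hl : List.Chain' (fun e f => S.G.s e = S.G.r f) l) :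
    List.Chain' (fun x y => S.L.s x = S.L.r y) (S.TL l) := by
  induction l with
  | nil => simp
  | cons e t ih =>
    rw [TL_cons, List.chain'_append]
    refine ⟨S.Te_chain e, ih hl.tail, ?_⟩
    intro x hx y hy
    rw [S.Te_getLast] at hx
    simp only [Option.mem_def, Option.some_inj] at hx
    subst hx
    cases t with
    | nil => simp at hy
    | cons f u =>
      have hef : S.G.s e = S.G.r f := List.chain'_cons.mp hl |>.1
      have : (S.TL (f :: u)).head?.map S.L.r = some (Sum.inl (S.G.r f)) := by
        rw [S.TL_head_r]; rfl
      have hy' : S.L.r y = Sum.inl (S.G.r f) := by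
        cases hht : (S.TL (f :: u)).head? with
        | none => rw [hht] at hy; simp at hy
        | some z =>
          rw [hht] at hy this
          simp only [Option.mem_def, Option.some_inj] at hy
          subst hy
          exact Option.some_inj.mp this
      rw [S.s_inl, hy', hef]

noncomputable def retr (m : List S.L.E) : List S.G.E :=
  m.filterMap (fun x => match x with | Sum.inl e => some e | Sum.inr _ => none)

lemma retr_run (n : ℕ) : S.retr (S.run n) = [] := by
  unfold retr run
  rw [List.filterMap_map]
  exact List.filterMap_eq_nil_iff.mpr (fun a _ => rfl)

lemma retr_append (m₁ m₂ : List S.L.E) : S.retr (m₁ ++ m₂) = S.retr m₁ ++ S.retr m₂ :=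
  List.filterMap_append

lemma retr_Te (e : S.G.E) : S.retr (S.Te e) = [e] := by
  unfold Te
  rw [S.retr_append, S.retr_run]
  rfl

lemma retr_TL (l : List S.G.E) : S.retr (S.TL l) = l := by
  induction l with
  | nil => rfl
  | cons e t ih => rw [TL_cons, S.retr_append, S.retr_Te, ih]; rfl

lemma TL_injective : Function.Injective S.TL := by
  intro l₁ l₂ h
  rw [← S.retr_TL l₁, h, S.retr_TL]

lemma suffix_run (j : ℕ) :
    ∀ (hj : j < S.d - 2) (m₁ m₃ : List S.L.E) (y : S.L.E),
    List.Chain' (fun x z => S.L.s x = S.L.r z) (m₁ ++ y :: m₃) →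
    (∀ a ∈ (m₁ ++ y :: m₃).head?.map S.L.r, a ∈ Set.range (Sum.inl : S.G.V → S.L.V)) →
    S.L.r y = Sum.inr ⟨j, hj⟩ →
    ∃ m₀, m₁ = m₀ ++ S.run (j + 1) ∧ (∀ a ∈ m₀.getLast?, ∃ e, a = Sum.inl e) := by
  induction j with
  | zero =>
    intro hj m₁ m₃ y hc hh hr
    rcases List.eq_nil_or_concat m₁ with rfl | ⟨m₀, z, rfl⟩
    · exfalso
      have : S.L.r y ∈ Set.range (Sum.inl : S.G.V → S.L.V) := hh _ (by exact rfl)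
      rw [hr] at this
      obtain ⟨w, hw⟩ := this
      exact absurd hw (by simp)
    · simp only [List.concat_eq_append] at hc hh
      have hc' : List.Chain' (fun x z => S.L.s x = S.L.r z) (m₀ ++ z :: y :: m₃) := by
        rwa [List.append_assoc, List.singleton_append] at hc
      have hzy : S.L.s z = S.L.r y :=
        (List.chain'_cons.mp (List.chain'_append.mp hc').2.1).1
      rw [hr] at hzy
      obtain (⟨f, rfl⟩ | ⟨i, rfl⟩) : (∃ f, z = Sum.inl f) ∨ (∃ i, z = Sum.inr i) := by
        rcases z with f | i
        · exact Or.inl ⟨f, rfl⟩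
        · exact Or.inr ⟨i, rfl⟩
      · rw [S.s_inl] at hzy; exact absurd hzy (by simp)
      · rw [S.s_inr] at hzy
        replace hzy : i = ⟨0, hj⟩ := Sum.inr.inj hzy
        subst hzy
        refine ⟨m₀, ?_, ?_⟩
        · rw [S.run_succ hj, run_zero, List.nil_append, List.concat_eq_append]
        · intro a ha
          have hrz : S.L.r (Sum.inr (⟨0, hj⟩ : Fin (S.d - 2))) = Sum.inl S.v :=
            S.r_inr_zero _ rfl
          have haz : S.L.s a = S.L.r (Sum.inr (⟨0, hj⟩ : Fin (S.d - 2))) :=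
            (List.chain'_append.mp hc').2.2 a ha _ (by simp)
          rw [hrz] at haz
          rcases a with f | i
          · exact ⟨f, rfl⟩
          · rw [S.s_inr] at haz; exact absurd haz (by simp)
  | succ jj ih =>
    intro hj m₁ m₃ y hc hh hr
    rcases List.eq_nil_or_concat m₁ with rfl | ⟨m₁', z, rfl⟩
    · exfalso
      have : S.L.r y ∈ Set.range (Sum.inl : S.G.V → S.L.V) := hh _ (by exact rfl)
      rw [hr] at this
      obtain ⟨w, hw⟩ := this
      exact absurd hw (by simp)
    · simp only [List.concat_eq_append] at hc hh
      have hc' : List.Chain' (fun x z => S.L.s x = S.L.r z) (m₁' ++ z :: y :: m₃) := by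
        rwa [List.append_assoc, List.singleton_append] at hc
      have hh' : ∀ a ∈ (m₁' ++ z :: y :: m₃).head?.map S.L.r,
          a ∈ Set.range (Sum.inl : S.G.V → S.L.V) := by
        rwa [List.append_assoc, List.singleton_append] at hh
      have hzy : S.L.s z = S.L.r y :=
        (List.chain'_cons.mp (List.chain'_append.mp hc').2.1).1
      rw [hr] at hzy
      obtain (⟨f, rfl⟩ | ⟨i, rfl⟩) : (∃ f, z = Sum.inl f) ∨ (∃ i, z = Sum.inr i) := by
        rcases z with f | i
        · exact Or.inl ⟨f, rfl⟩
        · exact Or.inr ⟨i, rfl⟩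
      · rw [S.s_inl] at hzy; exact absurd hzy (by simp)
      · rw [S.s_inr] at hzy
        replace hzy : i = ⟨jj + 1, hj⟩ := Sum.inr.inj hzy
        subst hzy
        have hrz : S.L.r (Sum.inr (⟨jj + 1, hj⟩ : Fin (S.d - 2))) =
            Sum.inr ⟨jj, by omega⟩ := by
          rw [S.r_inr_pos _ (by simp)]
          rfl
        obtain ⟨m₀, hm₀, hlast⟩ := ih (by omega) m₁' (y :: m₃) _ hc' hh' hrz
        refine ⟨m₀, ?_, hlast⟩
        rw [List.concat_eq_append, hm₀, S.run_succ hj, List.append_assoc]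

lemma surj_aux (n : ℕ) : ∀ (m : List S.L.E), m.length ≤ n →
    List.Chain' (fun x z => S.L.s x = S.L.r z) m →
    (∀ a ∈ m.head?.map S.L.r, a ∈ Set.range (Sum.inl : S.G.V → S.L.V)) →
    (∀ a ∈ m.getLast?.map S.L.s, a ∈ Set.range (Sum.inl : S.G.V → S.L.V)) →
    ∃ l, List.Chain' (fun e f => S.G.s e = S.G.r f) l ∧ S.TL l = m := by
  induction n with
  | zero =>
    intro m hlen _ _ _
    have : m = [] := List.length_eq_zero_iff.mp (by omega)
    exact ⟨[], by simp, by rw [this]; rfl⟩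
  | succ n ih =>
    intro m hlen hc hh ht
    rcases List.eq_nil_or_concat m with rfl | ⟨m₁, x, rfl⟩
    · exact ⟨[], by simp, rfl⟩
    simp only [List.concat_eq_append] at hlen hc hh ht ⊢
    obtain ⟨e, rfl⟩ : ∃ e, x = Sum.inl e := by
      have : S.L.s x ∈ Set.range (Sum.inl : S.G.V → S.L.V) := by
        apply ht
        rw [List.getLast?_concat]
        rfl
      rcases x with f | i
      · exact ⟨f, rfl⟩
      · rw [S.s_inr] at this
        obtain ⟨w, hw⟩ := this
        exact absurd hw (by simp)
    by_cases hm : S.mink e = 0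
    · -- block is [inl e]
      have hchain₁ : List.Chain' (fun x z => S.L.s x = S.L.r z) m₁ :=
        (List.chain'_append.mp hc).1
      have hh₁ : ∀ a ∈ m₁.head?.map S.L.r, a ∈ Set.range (Sum.inl : S.G.V → S.L.V) := by
        rcases List.eq_nil_or_concat m₁ with rfl | ⟨m₁', z, rfl⟩
        · exact fun a ha => by cases ha
        · intro a ha
          apply hh
          rwa [List.head?_append_of_ne_nil _ (by simp)]
      have ht₁ : ∀ a ∈ m₁.getLast?.map S.L.s, a ∈ Set.range (Sum.inl : S.G.V → S.L.V) := by
        intro a ha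
        replace ha := Option.map_eq_some_iff.mp ha
        obtain ⟨w, hw, rfl⟩ := ha
        have : S.L.s w = S.L.r (Sum.inl e) :=
          (List.chain'_append.mp hc).2.2 w hw _ (by simp)
        rw [this, S.r_inl_zero e hm]
        exact ⟨_, rfl⟩
      have hlen₁ : m₁.length ≤ n := by
        rw [List.length_append] at hlen; simp at hlen; omega
      obtain ⟨l₁, hlc, hleq⟩ := ih m₁ hlen₁ hchain₁ hh₁ ht₁
      refine ⟨l₁ ++ [e], ?_, ?_⟩
      · rw [List.chain'_append]
        refine ⟨hlc, List.chain'_singleton _, ?_⟩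
        intro f hf g hg
        simp only [List.head?_cons, Option.mem_def, Option.some_inj] at hg
        subst hg
        have hfl : (S.TL l₁).getLast? = some (Sum.inl f) := by
          rw [S.TL_getLast, hf]; rfl
        rw [hleq] at hfl
        have : S.L.s (Sum.inl f) = S.L.r (Sum.inl e) :=
          (List.chain'_append.mp hc).2.2 _ hfl _ (by simp)
        rw [S.s_inl, S.r_inl_zero e hm] at this
        exact Sum.inl.inj this
      · rw [S.TL_append, hleq, S.TL_cons, TL_nil, List.append_nil]
        congr 1
        unfold Te
        rw [hm, run_zero, List.nil_append]
    · -- block is run (mink e) ++ [inl e]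
      have hrx : S.L.r (Sum.inl e) = Sum.inr ⟨S.mink e - 1,
          by have := S.mink_le e; have := S.d2_pos; omega⟩ := S.r_inl_pos e hm
      obtain ⟨m₀, hm₀, hlast₀⟩ := S.suffix_run (S.mink e - 1)
        (by have := S.mink_le e; have := S.d2_pos; omega) m₁ [] _ hc hh hrx
      have hmk : S.mink e - 1 + 1 = S.mink e := by omega
      rw [hmk] at hm₀
      have hmeq : m₁ ++ ([Sum.inl e] : List S.L.E) = m₀ ++ S.Te e := by
        rw [hm₀, List.append_assoc]; rfl
      have hassoc : m₁ ++ ([Sum.inl e] : List S.L.E) =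
          m₀ ++ (S.run (S.mink e) ++ ([Sum.inl e] : List S.L.E)) := by
        rw [hm₀, List.append_assoc]
      have hchain₀ : List.Chain' (fun x z => S.L.s x = S.L.r z) m₀ := by
        rw [hassoc] at hc
        exact (List.chain'_append.mp hc).1
      have hh₀ : ∀ a ∈ m₀.head?.map S.L.r, a ∈ Set.range (Sum.inl : S.G.V → S.L.V) := by
        rcases List.eq_nil_or_concat m₀ with rfl | ⟨m₀', z, rfl⟩
        · exact fun a ha => by cases ha
        · intro a ha
          apply hh
          rw [hassoc, List.head?_append_of_ne_nil _ (by simp)]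
          exact ha
      have ht₀ : ∀ a ∈ m₀.getLast?.map S.L.s, a ∈ Set.range (Sum.inl : S.G.V → S.L.V) := by
        intro a ha
        replace ha := Option.map_eq_some_iff.mp ha
        obtain ⟨w, hw, rfl⟩ := ha
        obtain ⟨f, rfl⟩ := hlast₀ w hw
        rw [S.s_inl]
        exact ⟨_, rfl⟩
      have hlen₀ : m₀.length ≤ n := by
        have h1 : (m₁ ++ ([Sum.inl e] : List S.L.E)).length ≤ n + 1 := hlen
        rw [hmeq] at h1
        have h2 : (S.Te e).length ≠ 0 := by
          simpa using S.Te_ne_nil e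
        rw [List.length_append] at h1
        omega
      obtain ⟨l₀, hlc, hleq⟩ := ih m₀ hlen₀ hchain₀ hh₀ ht₀
      refine ⟨l₀ ++ [e], ?_, ?_⟩
      · rw [List.chain'_append]
        refine ⟨hlc, List.chain'_singleton _, ?_⟩
        intro f hf g hg
        simp only [List.head?_cons, Option.mem_def, Option.some_inj] at hg
        subst hg
        have hfl : (S.TL l₀).getLast? = some (Sum.inl f) := by
          rw [S.TL_getLast, hf]; rfl
        rw [hleq] at hfl
        have hjun : S.L.s (Sum.inl f) = S.L.r (Sum.inr (⟨0, S.d2_pos⟩ : Fin (S.d - 2))) := by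
          rw [hassoc] at hc
          refine (List.chain'_append.mp hc).2.2 _ hfl _ ?_
          rw [List.head?_append_of_ne_nil _ (S.run_ne_nil hm), S.run_head hm]
          rfl
        rw [S.s_inl, S.r_inr_zero _ rfl] at hjun
        have hf' : S.G.s f = S.v := Sum.inl.inj hjun
        rw [hf', S.rv_of_mink_pos hm]
      · rw [S.TL_append, hleq, S.TL_cons, TL_nil, List.append_nil]
        exact hmeq.symm

lemma TL_isPathFrom {l : List S.G.E} {src tgt : S.G.V}
    (h : IsPathFrom S.G.r S.G.s l src tgt) :
    IsPathFrom S.L.r S.L.s (S.TL l) (Sum.inl src) (Sum.inl tgt) := by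
  obtain ⟨hc, hh, ht⟩ := h
  refine ⟨S.TL_chain hc, ?_, ?_⟩
  · rw [S.TL_head_r, hh]; rfl
  · rw [S.TL_getLast_s, ht]; rfl

lemma mink_symm (k : Fin S.d) : S.mink (S.enum.symm k).1 = min k.val (S.d - 2) := by
  rw [S.mink_eq_pos (S.enum.symm k).2]
  congr 2
  have h : (⟨(S.enum.symm k).1, (S.enum.symm k).2⟩ : {e : S.G.E // S.G.r e = S.v}) =
      S.enum.symm k := Subtype.ext rfl
  rw [h, Equiv.apply_symm_apply]

lemma pre_path (i : Fin (S.d - 2)) :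
    ∃ e : S.G.E, IsPathFrom S.L.r S.L.s [Sum.inl e] (Sum.inl (S.G.s e)) (Sum.inr i) := by
  have hd := S.hd
  have hlt : i.val + 1 < S.d := by have := i.isLt; omega
  refine ⟨(S.enum.symm ⟨i.val + 1, hlt⟩).1, ?_, ?_, ?_⟩
  · exact List.chain'_singleton _
  · have hm : S.mink (S.enum.symm ⟨i.val + 1, hlt⟩).1 = i.val + 1 := by
      rw [S.mink_symm]
      simp only
      have := i.isLt
      omega
    rw [List.head?_cons, Option.map_some, S.r_inl_pos _ (by omega)]
    congr 2
    apply Fin.ext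
    simp [hm]
  · rfl

lemma suf_path (i : Fin (S.d - 2)) :
    IsPathFrom S.L.r S.L.s (S.run (i.val + 1)) (Sum.inr i) (Sum.inl S.v) := by
  have hle : i.val + 1 ≤ S.d - 2 := i.isLt
  refine ⟨S.run_chain hle, ?_, ?_⟩
  · rw [S.run_head (by omega), Option.map_some, S.r_inr_zero _ rfl]
  · rw [S.run_getLast (by omega) hle, Option.map_some, S.s_inr]
    congr 2

lemma L_transitive (htrans : S.G.Transitive) : S.L.Transitive := by
  rintro (u | i) (w | i')
  · obtain ⟨l, hl⟩ := htrans u w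
    exact ⟨S.TL l, S.TL_isPathFrom hl⟩
  · obtain ⟨e, he⟩ := S.pre_path i'
    obtain ⟨l, hl⟩ := htrans u (S.G.s e)
    exact ⟨([Sum.inl e] : List S.L.E) ++ S.TL l, isPathFrom_append _ _ he (S.TL_isPathFrom hl)⟩
  · obtain ⟨l, hl⟩ := htrans S.v w
    exact ⟨S.TL l ++ S.run (i.val + 1),
      isPathFrom_append _ _ (S.TL_isPathFrom hl) (S.suf_path i)⟩
  · obtain ⟨e, he⟩ := S.pre_path i'
    obtain ⟨l, hl⟩ := htrans S.v (S.G.s e)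
    exact ⟨([Sum.inl e] : List S.L.E) ++ S.TL l ++ S.run (i.val + 1),
      isPathFrom_append _ _ (isPathFrom_append _ _ he (S.TL_isPathFrom hl)) (S.suf_path i)⟩

lemma degL_inl_ne (u : S.G.V) (hu : u ≠ S.v) :
    Nat.card {x : S.L.E // S.L.r x = Sum.inl u} =
    Nat.card {e : S.G.E // S.G.r e = u} := by
  symm
  apply Nat.card_eq_of_bijective (fun p => (⟨Sum.inl p.1, by
    have hne : ¬ S.G.r p.1 = S.v := by rw [p.2]; exact hu
    rw [S.r_inl_zero _ (S.mink_eq_zero hne), p.2]⟩ : {x : S.L.E // S.L.r x = Sum.inl u}))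
  constructor
  · intro p q h
    exact Subtype.ext (Sum.inl.inj (congrArg Subtype.val h))
  · rintro ⟨(e | i), hx⟩
    · by_cases hm : S.mink e = 0
      · rw [S.r_inl_zero e hm] at hx
        exact ⟨⟨e, Sum.inl.inj hx⟩, Subtype.ext rfl⟩
      · rw [S.r_inl_pos e hm] at hx
        exact absurd hx (by simp)
    · by_cases h0 : i.val = 0
      · rw [S.r_inr_zero i h0] at hx
        exact absurd (Sum.inl.inj hx) (Ne.symm hu)
      · rw [S.r_inr_pos i h0] at hx
        exact absurd hx (by simp)

lemma degL_inl_v : Nat.card {x : S.L.E // S.L.r x = Sum.inl S.v} = 2 := by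
  have hd := S.hd
  have h0d : (0 : ℕ) < S.d := by omega
  rw [Nat.card_eq_two_iff]
  have he0 := (S.enum.symm ⟨0, h0d⟩).2
  have hme0 : S.mink (S.enum.symm ⟨0, h0d⟩).1 = 0 := by
    rw [S.mink_symm]; simp
  refine ⟨⟨Sum.inl (S.enum.symm ⟨0, h0d⟩).1, by rw [S.r_inl_zero _ hme0, he0]⟩,
    ⟨Sum.inr ⟨0, S.d2_pos⟩, S.r_inr_zero _ rfl⟩, by simp [Subtype.ext_iff], ?_⟩
  apply Set.eq_univ_iff_forall.mpr
  rintro ⟨(e | i), hx⟩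
  · by_cases hm : S.mink e = 0
    · rw [S.r_inl_zero e hm] at hx
      have hv : S.G.r e = S.v := Sum.inl.inj hx
      have hk : (S.enum ⟨e, hv⟩).val = 0 := by
        rw [S.mink_eq_pos hv] at hm
        have := S.d2_pos
        omega
      have : (⟨e, hv⟩ : {e : S.G.E // S.G.r e = S.v}) = S.enum.symm ⟨0, h0d⟩ := by
        apply S.enum.injective
        rw [Equiv.apply_symm_apply]
        exact Fin.ext hk
      left
      apply Subtype.ext
      simp only
      rw [show e = (⟨e, hv⟩ : {e : S.G.E // S.G.r e = S.v}).1 from rfl, this]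
    · rw [S.r_inl_pos e hm] at hx
      exact absurd hx (by simp)
  · by_cases h0 : i.val = 0
    · right
      apply Subtype.ext
      simp only
      congr 1
      exact Fin.ext h0
    · rw [S.r_inr_pos i h0] at hx
      exact absurd hx (by simp)

lemma degL_inr (j : Fin (S.d - 2)) :
    Nat.card {x : S.L.E // S.L.r x = Sum.inr j} = 2 := by
  have hd := S.hd
  have hjlt := j.isLt
  rw [Nat.card_eq_two_iff]
  have hlt1 : j.val + 1 < S.d := by omega
  set e₁ : S.G.E := (S.enum.symm ⟨j.val + 1, hlt1⟩).1 with he₁def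
  have he₁v := (S.enum.symm ⟨j.val + 1, hlt1⟩).2
  have hm₁ : S.mink e₁ = j.val + 1 := by
    rw [he₁def, S.mink_symm]; simp only; omega
  have ha : S.L.r (Sum.inl e₁) = Sum.inr j := by
    rw [S.r_inl_pos _ (by omega)]
    congr 1
    apply Fin.ext
    simp [hm₁]
  by_cases hj : j.val + 1 < S.d - 2
  · refine ⟨⟨Sum.inl e₁, ha⟩, ⟨Sum.inr ⟨j.val + 1, hj⟩, by
      rw [S.r_inr_pos _ (by simp)]
      congr 1⟩, by simp [Subtype.ext_iff], ?_⟩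
    apply Set.eq_univ_iff_forall.mpr
    rintro ⟨(e | i), hx⟩
    · have hm : S.mink e ≠ 0 := by
        intro hm; rw [S.r_inl_zero e hm] at hx; exact absurd hx (by simp)
      rw [S.r_inl_pos e hm] at hx
      have hmj : S.mink e = j.val + 1 := by
        have h2 := congrArg Fin.val (Sum.inr.inj hx)
        simp at h2
        omega
      have hv := S.rv_of_mink_pos hm
      rw [S.mink_eq_pos hv] at hmj
      have hk : (S.enum ⟨e, hv⟩).val = j.val + 1 := by
        have := (S.enum ⟨e, hv⟩).isLt
        omega
      have : (⟨e, hv⟩ : {e : S.G.E // S.G.r e = S.v}) = S.enum.symm ⟨j.val + 1, hlt1⟩ := by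
        apply S.enum.injective
        rw [Equiv.apply_symm_apply]
        exact Fin.ext hk
      left
      apply Subtype.ext
      simp only [he₁def]
      rw [show e = (⟨e, hv⟩ : {e : S.G.E // S.G.r e = S.v}).1 from rfl, this]
    · have h0 : i.val ≠ 0 := by
        intro h0; rw [S.r_inr_zero i h0] at hx; exact absurd hx (by simp)
      rw [S.r_inr_pos i h0] at hx
      have hij : i.val = j.val + 1 := by
        have h2 := congrArg Fin.val (Sum.inr.inj hx)
        simp at h2
        omega
      right
      apply Subtype.ext
      simp only
      congr 1
      exact Fin.ext hij
  · -- j + 1 = d - 2 : second edge has enum value d - 1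
    have hj2 : j.val + 1 = S.d - 2 := by omega
    have hlt2 : S.d - 1 < S.d := by omega
    set e₂ : S.G.E := (S.enum.symm ⟨S.d - 1, hlt2⟩).1 with he₂def
    have he₂v := (S.enum.symm ⟨S.d - 1, hlt2⟩).2
    have hm₂ : S.mink e₂ = S.d - 2 := by
      rw [he₂def, S.mink_symm]; simp only; omega
    have hb : S.L.r (Sum.inl e₂) = Sum.inr j := by
      rw [S.r_inl_pos _ (by omega)]
      congr 1
      apply Fin.ext
      simp only [hm₂]
      omega
    refine ⟨⟨Sum.inl e₁, ha⟩, ⟨Sum.inl e₂, hb⟩, ?_, ?_⟩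
    · intro h
      have h1 : e₁ = e₂ := Sum.inl.inj (congrArg Subtype.val h)
      have h2 : (S.enum.symm ⟨j.val + 1, hlt1⟩) = (S.enum.symm ⟨S.d - 1, hlt2⟩) :=
        Subtype.ext h1
      have h3 := congrArg (fun z => (S.enum z).val) h2
      simp only [Equiv.apply_symm_apply] at h3
      omega
    apply Set.eq_univ_iff_forall.mpr
    rintro ⟨(e | i), hx⟩
    · have hm : S.mink e ≠ 0 := by
        intro hm; rw [S.r_inl_zero e hm] at hx; exact absurd hx (by simp)
      rw [S.r_inl_pos e hm] at hx
      have hmj : S.mink e = j.val + 1 := by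
        have h2 := congrArg Fin.val (Sum.inr.inj hx)
        simp at h2
        omega
      have hv := S.rv_of_mink_pos hm
      rw [S.mink_eq_pos hv] at hmj
      have hkd := (S.enum ⟨e, hv⟩).isLt
      by_cases hk : (S.enum ⟨e, hv⟩).val ≤ S.d - 2
      · have hk1 : (S.enum ⟨e, hv⟩).val = j.val + 1 := by omega
        have : (⟨e, hv⟩ : {e : S.G.E // S.G.r e = S.v}) = S.enum.symm ⟨j.val + 1, hlt1⟩ := by
          apply S.enum.injective
          rw [Equiv.apply_symm_apply]
          exact Fin.ext hk1
        left
        apply Subtype.ext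
        simp only [he₁def]
        rw [show e = (⟨e, hv⟩ : {e : S.G.E // S.G.r e = S.v}).1 from rfl, this]
      · have hk1 : (S.enum ⟨e, hv⟩).val = S.d - 1 := by omega
        have : (⟨e, hv⟩ : {e : S.G.E // S.G.r e = S.v}) = S.enum.symm ⟨S.d - 1, hlt2⟩ := by
          apply S.enum.injective
          rw [Equiv.apply_symm_apply]
          exact Fin.ext hk1
        right
        apply Subtype.ext
        simp only [he₂def]
        rw [show e = (⟨e, hv⟩ : {e : S.G.E // S.G.r e = S.v}).1 from rfl, this]
    · exfalso
      have h0 : i.val ≠ 0 := by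
        intro h0; rw [S.r_inr_zero i h0] at hx; exact absurd hx (by simp)
      rw [S.r_inr_pos i h0] at hx
      have h2 := congrArg Fin.val (Sum.inr.inj hx)
      simp at h2
      have := i.isLt
      omega

theorem good : Good S.G S.L := by
  refine ⟨Sum.inl, Sum.inl_injective, S.TL, S.TL_append, S.TL_head_r, S.TL_getLast_s,
    ?_, ?_, ?_⟩
  · intro l hl
    refine ⟨S.TL_chain hl, ?_, ?_⟩
    · intro a ha
      rw [S.TL_head_r] at ha
      simp only [Option.mem_def, Option.map_eq_some_iff] at ha
      obtain ⟨x, _, rfl⟩ := ha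
      exact ⟨x, rfl⟩
    · intro a ha
      rw [S.TL_getLast_s] at ha
      simp only [Option.mem_def, Option.map_eq_some_iff] at ha
      obtain ⟨x, _, rfl⟩ := ha
      exact ⟨x, rfl⟩
  · intro a _ b _ h
    exact S.TL_injective h
  · rintro m ⟨hc, hh, ht⟩
    obtain ⟨l, hlc, hleq⟩ := S.surj_aux m.length m le_rfl hc hh ht
    exact ⟨l, hlc, hleq⟩

lemma degL_ge_two (hdeg2 : ∀ u : S.G.V, 2 ≤ Nat.card {e : S.G.E // S.G.r e = u}) :
    ∀ w : S.L.V, 2 ≤ Nat.card {x : S.L.E // S.L.r x = w} := by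
  rintro (u | i)
  · by_cases hu : u = S.v
    · subst hu; rw [S.degL_inl_v]
    · rw [S.degL_inl_ne u hu]; exact hdeg2 u
  · rw [S.degL_inr i]

lemma measure_lt (hcard : Nat.card {e : S.G.E // S.G.r e = S.v} = S.d) :
    Nat.card {w : S.L.V // 3 ≤ Nat.card {x : S.L.E // S.L.r x = w}} <
    Nat.card {w : S.G.V // 3 ≤ Nat.card {e : S.G.E // S.G.r e = w}} := by
  have hfin := S.G.finV
  set A : Set S.G.V := {w : S.G.V | 3 ≤ Nat.card {e : S.G.E // S.G.r e = w}} with hA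
  set B : Set S.L.V := {w : S.L.V | 3 ≤ Nat.card {x : S.L.E // S.L.r x = w}} with hB
  have hBA : B = Sum.inl '' (A ∩ {u | u ≠ S.v}) := by
    ext w
    constructor
    · rintro hw
      rcases w with u | i
      · by_cases hu : u = S.v
        · exfalso
          have := hw
          rw [hB, Set.mem_setOf_eq, hu, S.degL_inl_v] at this
          omega
        · refine ⟨u, ⟨?_, hu⟩, rfl⟩
          have := hw
          rwa [hB, Set.mem_setOf_eq, S.degL_inl_ne u hu] at this
      · exfalso
        have := hw
        rw [hB, Set.mem_setOf_eq, S.degL_inr i] at this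
        omega
    · rintro ⟨u, ⟨hu3, huv⟩, rfl⟩
      rw [hB, Set.mem_setOf_eq, S.degL_inl_ne u huv]
      exact hu3
  have h1 : Nat.card {w : S.L.V // 3 ≤ Nat.card {x : S.L.E // S.L.r x = w}} = B.ncard :=
    Nat.card_coe_set_eq B
  have h2 : Nat.card {w : S.G.V // 3 ≤ Nat.card {e : S.G.E // S.G.r e = w}} = A.ncard :=
    Nat.card_coe_set_eq A
  rw [h1, h2, hBA, Set.ncard_image_of_injective _ Sum.inl_injective]
  apply Set.ncard_lt_ncard
  · constructor
    · exact Set.inter_subset_left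
    · intro hsub
      have hvA : S.v ∈ A := by
        rw [hA, Set.mem_setOf_eq, hcard]
        exact S.hd
      have := hsub hvA
      simp at this
  · exact A.toFinite

end LagSetup

theorem main_induction (n : ℕ) : ∀ G : FinDigraph,
    Nat.card {w : G.V // 3 ≤ Nat.card {e : G.E // G.r e = w}} ≤ n →
    G.Transitive → (∀ w : G.V, 2 ≤ Nat.card {e : G.E // G.r e = w}) →
    ∃ Ghat : FinDigraph, Relation.ReflTransGen LagStep G Ghat ∧ Ghat.Transitive ∧
      (∀ w : Ghat.V, Nat.card {e : Ghat.E // Ghat.r e = w} = 2) ∧ Good G Ghat := by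
  induction n with
  | zero =>
    intro G hn htrans hdeg2
    refine ⟨G, Relation.ReflTransGen.refl, htrans, ?_, Good.refl G⟩
    intro w
    by_contra hw
    have h3 : 3 ≤ Nat.card {e : G.E // G.r e = w} := by
      have := hdeg2 w
      omega
    have := G.finV
    have : 0 < Nat.card {w : G.V // 3 ≤ Nat.card {e : G.E // G.r e = w}} :=
      Nat.card_pos_iff.mpr ⟨⟨⟨w, h3⟩⟩, inferInstance⟩
    omega
  | succ n ih =>
    intro G hn htrans hdeg2
    by_cases hall : ∀ w : G.V, Nat.card {e : G.E // G.r e = w} = 2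
    · exact ⟨G, Relation.ReflTransGen.refl, htrans, hall, Good.refl G⟩
    · push_neg at hall
      obtain ⟨v, hv⟩ := hall
      have hd3 : 3 ≤ Nat.card {e : G.E // G.r e = v} := by
        have := hdeg2 v
        omega
      have hfe := G.finE
      have : Finite {e : G.E // G.r e = v} := inferInstance
      set d := Nat.card {e : G.E // G.r e = v} with hd
      let S : LagSetup := ⟨G, v, d, hd3, Finite.equivFin _⟩
      have hcard : Nat.card {e : S.G.E // S.G.r e = S.v} = S.d := rfl
      have hstep : LagStep G S.L := ⟨v, d, hd3, hcard, S.enum, rfl⟩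
      have hmeas := S.measure_lt hcard
      have hSG : Nat.card {w : S.G.V // 3 ≤ Nat.card {e : S.G.E // S.G.r e = w}} =
          Nat.card {w : G.V // 3 ≤ Nat.card {e : G.E // G.r e = w}} := rfl
      have htrans' := S.L_transitive htrans
      have hdeg2' := S.degL_ge_two hdeg2
      obtain ⟨Ghat, hrtg, htg, hdg, hgood⟩ := ih S.L (by omega) htrans' hdeg2'
      exact ⟨Ghat, Relation.ReflTransGen.head hstep hrtg, htg, hdg,
        Good.trans S.good hgood⟩


theorem stmt_16 (G : FinDigraph) (htrans : G.Transitive)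
    (hdeg2 : ∀ v : G.V, 2 ≤ Nat.card {e : G.E // G.r e = v}) :
    ∃ Ghat : FinDigraph, Relation.ReflTransGen LagStep G Ghat ∧
      Ghat.Transitive ∧
      (∀ w : Ghat.V, Nat.card {e : Ghat.E // Ghat.r e = w} = 2) ∧
      ∃ ι : G.V → Ghat.V, Function.Injective ι ∧
        ∃ Θ : List G.E → List Ghat.E,
          (∀ l₁ l₂ : List G.E, Θ (l₁ ++ l₂) = Θ l₁ ++ Θ l₂) ∧
          (∀ l : List G.E, (Θ l).head?.map Ghat.r = (l.head?.map G.r).map ι) ∧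
          (∀ l : List G.E, (Θ l).getLast?.map Ghat.s = (l.getLast?.map G.s).map ι) ∧
          Set.BijOn Θ
            {l : List G.E | List.Chain' (fun e f => G.s e = G.r f) l}
            {m : List Ghat.E | List.Chain' (fun x y => Ghat.s x = Ghat.r y) m ∧
              (∀ a ∈ m.head?.map Ghat.r, a ∈ Set.range ι) ∧
              (∀ a ∈ m.getLast?.map Ghat.s, a ∈ Set.range ι)} := by
  obtain ⟨Ghat, hrt, htr, hdeg, ι, hι, Θ, h1, h2, h3, h4⟩ :=
    main_induction (Nat.card {w : G.V // 3 ≤ Nat.card {e : G.E // G.r e = w}}) G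
      le_rfl htrans hdeg2
  exact ⟨Ghat, hrt, htr, hdeg, ι, hι, Θ, h1, h2, h3, h4⟩
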